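/- Let K be a triangulated category with translation T and let D be a set of generators of K, i.e. K is the smallest thick subcategory of K containing D. If α ∈ End(K) is such that α_d is nilpotent for every d ∈ D, then α is pointwise nilpotent, i.e. α_a is nilpotent for every object a ∈ K. -/

import Mathlib

/-!
The objects on which `α` is nilpotent form a thick subcategory, so they contain the thick
span of `D`, which is everything. Closure under isomorphisms, translations and summands comes
from naturality of `α` and `α_{T a} = T(α_a)`. For a distinguished triangle
`a → b → c → T a`, if `α_b^n = 0` then `α_c^n` vanishes on `b`, hence factors through
`c → T a`, and so `α_c^(n+m) = 0` as soon as `α_{T a}^m = 0`.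
-/

namespace Balmer

open CategoryTheory CategoryTheory.Limits CategoryTheory.Pretriangulated ZeroObject

universe v u v' u'

/-- An endomorphism of the identity functor of `K` which commutes with the
translation: a family of endomorphisms `α_a : a ⟶ a`, natural in `a`, with
`α_{T(a)} = T(α_a)`. -/
structure TriEnd (K : Type u) [Category.{v} K] [HasShift K ℤ] where
  app : ∀ a : K, a ⟶ a
  natural : ∀ {a b : K} (f : a ⟶ b), f ≫ app b = app a ≫ f
  shift : ∀ a : K, app ((shiftFunctor K (1 : ℤ)).obj a) = (shiftFunctor K (1 : ℤ)).map (app a)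

variable {K : Type u} [Category.{v} K] [HasShift K ℤ]

/-- The `n`-fold composition of an endomorphism with itself. -/
def endPow {a : K} (f : a ⟶ a) : ℕ → (a ⟶ a)
  | 0 => 𝟙 a
  | (n + 1) => endPow f n ≫ f

/-- An endomorphism `f : a ⟶ a` is nilpotent if `f^n = 0` for some `n ≥ 1`. -/
def IsNilpotentHom [Preadditive K] {a : K} (f : a ⟶ a) : Prop :=
  ∃ n : ℕ, endPow f (n + 1) = 0

/-- Multiplication (composition) in `End(K)`. -/
def TriEnd.mul (α β : TriEnd K) : TriEnd K where
  app a := α.app a ≫ β.app a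
  natural {a b} f := by
    try dsimp only
    rw [← Category.assoc, α.natural f, Category.assoc, β.natural f, ← Category.assoc]
  shift a := by
    try dsimp only
    rw [α.shift a, β.shift a, ← Functor.map_comp]

/-- The unit of `End(K)`. -/
def TriEnd.one : TriEnd K where
  app a := 𝟙 a
  natural {a b} f := by (try dsimp only); rw [Category.comp_id, Category.id_comp]
  shift a := by (try dsimp only); rw [CategoryTheory.Functor.map_id]

/-- Addition in `End(K)`. -/
def TriEnd.add [Preadditive K] [∀ n : ℤ, (shiftFunctor K n).Additive]
    (α β : TriEnd K) : TriEnd K where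
  app a := α.app a + β.app a
  natural {a b} f := by
    try dsimp only
    rw [Preadditive.comp_add, Preadditive.add_comp, α.natural f, β.natural f]
  shift a := by
    try dsimp only
    rw [Functor.map_add, α.shift a, β.shift a]

/-- `α ∈ End(K)` is pointwise nilpotent if each `α_a` is a nilpotent endomorphism. -/
def TriEnd.PNilpotent [Preadditive K] (α : TriEnd K) : Prop :=
  ∀ a : K, IsNilpotentHom (α.app a)

/-- A thick subcategory of `K` (identified with its set of objects): a full
triangulated subcategory closed under isomorphisms, translations, cones and direct
summands. -/
def IsThick [Preadditive K] [HasZeroObject K] [∀ n : ℤ, (shiftFunctor K n).Additive]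
    [Pretriangulated K] [HasBinaryBiproducts K] (S : Set K) : Prop :=
  (0 : K) ∈ S ∧
  (∀ ⦃a b : K⦄, (a ≅ b) → a ∈ S → b ∈ S) ∧
  (∀ a ∈ S, ∀ n : ℤ, (shiftFunctor K n).obj a ∈ S) ∧
  (∀ T ∈ (distTriang K), T.obj₁ ∈ S → T.obj₂ ∈ S → T.obj₃ ∈ S) ∧
  (∀ a b : K, (a ⊞ b) ∈ S → a ∈ S ∧ b ∈ S)

/-- The smallest thick subcategory of `K` containing `D`. -/
def thickSpan [Preadditive K] [HasZeroObject K] [∀ n : ℤ, (shiftFunctor K n).Additive]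
    [Pretriangulated K] [HasBinaryBiproducts K] (D : Set K) : Set K :=
  ⋂₀ {S : Set K | IsThick S ∧ D ⊆ S}

section endPow

variable {C : Type u'} [Category.{v'} C]

lemma comp_endPow_eq_endPow_comp {a b : C} {u : a ⟶ b} {f : a ⟶ a} {g : b ⟶ b}
    (h : u ≫ g = f ≫ u) : ∀ n : ℕ, u ≫ endPow g n = endPow f n ≫ u
  | 0 => by simp [endPow]
  | (n + 1) => by
    rw [endPow, endPow, ← Category.assoc, comp_endPow_eq_endPow_comp h n, Category.assoc, h,
      Category.assoc]

lemma endPow_add {a : C} (f : a ⟶ a) (p : ℕ) :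
    ∀ q : ℕ, endPow f (p + q) = endPow f p ≫ endPow f q
  | 0 => by simp [endPow]
  | (q + 1) => by rw [← Nat.add_assoc, endPow, endPow, endPow_add f p q, Category.assoc]

lemma map_endPow {D : Type*} [Category D] (F : C ⥤ D) {a : C} (f : a ⟶ a) :
    ∀ n : ℕ, F.map (endPow f n) = endPow (F.map f) n
  | 0 => by simp [endPow]
  | (n + 1) => by rw [endPow, endPow, F.map_comp, map_endPow F f n]

lemma endPow_add_eq_zero_of_factor [HasZeroMorphisms C] {a b : C} {f : a ⟶ a} {g : b ⟶ b}
    {p q : ℕ} (u : a ⟶ b) (ψ : b ⟶ a) (hp : endPow f p = u ≫ ψ) (hψ : ψ ≫ f = g ≫ ψ)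
    (hq : endPow g q = 0) : endPow f (p + q) = 0 := by
  rw [endPow_add, hp, Category.assoc, comp_endPow_eq_endPow_comp hψ, hq, zero_comp, comp_zero]

lemma IsNilpotentHom.of_retract [Preadditive C] {a b : C} {f : a ⟶ a} {g : b ⟶ b}
    (i : a ⟶ b) (r : b ⟶ a) (hir : i ≫ r = 𝟙 a) (h : i ≫ g = f ≫ i)
    (hg : IsNilpotentHom g) : IsNilpotentHom f := by
  obtain ⟨n, hn⟩ := hg
  refine ⟨n, ?_⟩
  calc endPow f (n + 1) = (endPow f (n + 1) ≫ i) ≫ r := by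
        rw [Category.assoc, hir, Category.comp_id]
    _ = 0 := by rw [← comp_endPow_eq_endPow_comp h, hn, comp_zero, zero_comp]

end endPow

lemma shift_mem_of_shift_one_mem_iff {S : Set K} (hiso : ∀ ⦃a b : K⦄, (a ≅ b) → a ∈ S → b ∈ S)
    (hshift : ∀ a : K, a ∈ S ↔ (shiftFunctor K (1 : ℤ)).obj a ∈ S) {a : K} (ha : a ∈ S) :
    ∀ n : ℤ, (shiftFunctor K n).obj a ∈ S := by
  intro n
  induction n using Int.induction_on with
  | zero => exact hiso ((shiftFunctorZero K ℤ).symm.app a) ha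
  | succ n ih => exact hiso ((shiftFunctorAdd K (n : ℤ) 1).app a).symm ((hshift _).1 ih)
  | pred n ih =>
    refine (hshift _).2 (hiso ?_ ih)
    exact (shiftFunctorAdd' K (-(n : ℤ) - 1) 1 (-(n : ℤ)) (by ring)).app a

lemma thickSpan_subset [Preadditive K] [HasZeroObject K] [∀ n : ℤ, (shiftFunctor K n).Additive]
    [Pretriangulated K] [HasBinaryBiproducts K] {D S : Set K} (hS : IsThick S) (hDS : D ⊆ S) :
    thickSpan D ⊆ S :=
  Set.sInter_subset_of_mem ⟨hS, hDS⟩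

namespace TriEnd

variable [Preadditive K] (α : TriEnd K)

def nilpotentLocus : Set K := {a | IsNilpotentHom (α.app a)}

lemma mem_nilpotentLocus_of_iso ⦃a b : K⦄ (e : a ≅ b) (ha : a ∈ α.nilpotentLocus) :
    b ∈ α.nilpotentLocus :=
  IsNilpotentHom.of_retract e.inv e.hom e.inv_hom_id (α.natural e.inv) ha

lemma mem_nilpotentLocus_iff_shift_one [∀ n : ℤ, (shiftFunctor K n).Additive] (a : K) :
    a ∈ α.nilpotentLocus ↔ (shiftFunctor K (1 : ℤ)).obj a ∈ α.nilpotentLocus := by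
  constructor
  · rintro ⟨n, hn⟩
    exact ⟨n, by rw [α.shift, ← map_endPow, hn, Functor.map_zero]⟩
  · rintro ⟨n, hn⟩
    refine ⟨n, (shiftFunctor K (1 : ℤ)).map_injective ?_⟩
    rw [Functor.map_zero, map_endPow, ← α.shift, hn]

lemma zero_mem_nilpotentLocus [HasZeroObject K] : (0 : K) ∈ α.nilpotentLocus :=
  ⟨0, Subsingleton.elim _ _⟩

lemma mem_nilpotentLocus_of_distTriang [HasZeroObject K] [∀ n : ℤ, (shiftFunctor K n).Additive]
    [Pretriangulated K] {T : Triangle K} (hT : T ∈ distTriang K) (h₁ : T.obj₁ ∈ α.nilpotentLocus)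
    (h₂ : T.obj₂ ∈ α.nilpotentLocus) : T.obj₃ ∈ α.nilpotentLocus := by
  obtain ⟨n, hn⟩ := h₂
  obtain ⟨m, hm⟩ := (α.mem_nilpotentLocus_iff_shift_one _).1 h₁
  have hkill : T.mor₂ ≫ endPow (α.app T.obj₃) (n + 1) = 0 := by
    rw [comp_endPow_eq_endPow_comp (α.natural T.mor₂), hn, zero_comp]
  obtain ⟨ψ, hψ⟩ := T.yoneda_exact₃ hT _ hkill
  exact ⟨n + 1 + m, endPow_add_eq_zero_of_factor (q := m + 1) T.mor₃ ψ hψ (α.natural ψ) hm⟩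

lemma mem_nilpotentLocus_of_biprod [HasBinaryBiproducts K] {a b : K}
    (h : (a ⊞ b) ∈ α.nilpotentLocus) : a ∈ α.nilpotentLocus ∧ b ∈ α.nilpotentLocus :=
  ⟨IsNilpotentHom.of_retract biprod.inl biprod.fst biprod.inl_fst (α.natural _) h,
    IsNilpotentHom.of_retract biprod.inr biprod.snd biprod.inr_snd (α.natural _) h⟩

lemma isThick_nilpotentLocus [HasZeroObject K] [∀ n : ℤ, (shiftFunctor K n).Additive]
    [Pretriangulated K] [HasBinaryBiproducts K] : IsThick α.nilpotentLocus :=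
  ⟨α.zero_mem_nilpotentLocus, α.mem_nilpotentLocus_of_iso,
    fun _ ha => shift_mem_of_shift_one_mem_iff α.mem_nilpotentLocus_of_iso
      α.mem_nilpotentLocus_iff_shift_one ha,
    fun _ hT => α.mem_nilpotentLocus_of_distTriang hT, fun _ _ => α.mem_nilpotentLocus_of_biprod⟩

end TriEnd

/-- Proposition 6.3: if `D` generates `K` as a thick subcategory and
`α ∈ End(K)` is nilpotent on every object of `D`, then `α` is pointwise nilpotent. -/
theorem stmt14 [Preadditive K] [HasZeroObject K] [∀ n : ℤ, (shiftFunctor K n).Additive]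
    [Pretriangulated K] [HasBinaryBiproducts K]
    (D : Set K) (hD : thickSpan D = Set.univ)
    (α : TriEnd K) (hnil : ∀ d ∈ D, IsNilpotentHom (α.app d)) :
    α.PNilpotent :=
  fun a => thickSpan_subset α.isThick_nilpotentLocus hnil (hD ▸ Set.mem_univ a)

end Balmer
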